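/- arXiv:math/0511202 — 6 statements merged into one kernel-verified Lean document; each statement's English description precedes it below -/
import Mathlib

section
/- Let m ≥ 2 be an integer and define g_i = (∑_{j=0}^{i} C(m-1, j)) / C(m-1, i) for 0 ≤ i ≤ m-2. Then g_{i-1} < g_i for all 1 ≤ i ≤ m-2, i.e., the sequence g_i is strictly increasing. -/
/-! The ratio `C(n, k+1) / C(n, k) = (n - k) / (k + 1)` decreases in `k`, so
`C(n, j) C(n, i+1) ≤ C(n, j+1) C(n, i)` for `j ≤ i`. Summing over `j ≤ i` and adding the positive
term `C(n, 0) C(n, i)` gives `(∑_{j ≤ i} C(n, j)) C(n, i+1) < (∑_{j ≤ i+1} C(n, j)) C(n, i)`,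
which is `g_i < g_{i+1}` after clearing denominators. -/

namespace Nat

theorem choose_mul_choose_succ_le_choose_succ_mul_choose (n : ℕ) {i j : ℕ} (hji : j ≤ i) :
    n.choose j * n.choose (i + 1) ≤ n.choose (j + 1) * n.choose i := by
  have hfactor : (j + 1) * (n - i) ≤ (i + 1) * (n - j) := Nat.mul_le_mul (by omega) (by omega)
  refine Nat.le_of_mul_le_mul_right ?_ (Nat.mul_pos j.succ_pos i.succ_pos)
  calc n.choose j * n.choose (i + 1) * ((j + 1) * (i + 1))
      = n.choose j * n.choose i * ((j + 1) * (n - i)) := by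
        linear_combination n.choose j * (j + 1) * choose_succ_right_eq n i
    _ ≤ n.choose j * n.choose i * ((i + 1) * (n - j)) := Nat.mul_le_mul_left _ hfactor
    _ = n.choose (j + 1) * n.choose i * ((j + 1) * (i + 1)) := by
        linear_combination n.choose i * (i + 1) * (choose_succ_right_eq n j).symm

theorem sum_range_choose_mul_choose_succ_lt (n : ℕ) {i : ℕ} (hi : i ≤ n) :
    (∑ j ∈ Finset.range (i + 1), n.choose j) * n.choose (i + 1)
      < (∑ j ∈ Finset.range (i + 2), n.choose j) * n.choose i := by
  have hfirst : 0 < n.choose 0 * n.choose i := Nat.mul_pos (choose_pos n.zero_le) (choose_pos hi)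
  calc (∑ j ∈ Finset.range (i + 1), n.choose j) * n.choose (i + 1)
      = ∑ j ∈ Finset.range (i + 1), n.choose j * n.choose (i + 1) := Finset.sum_mul ..
    _ ≤ ∑ j ∈ Finset.range (i + 1), n.choose (j + 1) * n.choose i :=
        Finset.sum_le_sum fun j hj =>
          choose_mul_choose_succ_le_choose_succ_mul_choose n (Finset.mem_range_succ_iff.mp hj)
    _ < ∑ j ∈ Finset.range (i + 1), n.choose (j + 1) * n.choose i + n.choose 0 * n.choose i :=
        Nat.lt_add_of_pos_right hfirst
    _ = (∑ j ∈ Finset.range (i + 2), n.choose j) * n.choose i := by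
        rw [Finset.sum_mul, Finset.sum_range_succ' _ (i + 1)]

end Nat

theorem sum_range_choose_div_choose_lt_succ {K : Type*} [Field K] [LinearOrder K]
    [IsStrictOrderedRing K] (n : ℕ) {i : ℕ} (hi : i + 1 ≤ n) :
    (∑ j ∈ Finset.range (i + 1), (n.choose j : K)) / n.choose i
      < (∑ j ∈ Finset.range (i + 2), (n.choose j : K)) / n.choose (i + 1) := by
  have hpos : ∀ k ≤ n, (0 : K) < n.choose k := fun k hk => by exact_mod_cast Nat.choose_pos hk
  rw [div_lt_div_iff₀ (hpos i (by omega)) (hpos (i + 1) hi)]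
  exact_mod_cast Nat.sum_range_choose_mul_choose_succ_lt n (by omega : i ≤ n)

theorem stmt2_general (m : ℕ)
    (g : ℕ → ℚ)
    (hg : ∀ i, i ≤ m - 2 →
      g i = (∑ j ∈ Finset.range (i + 1), ((m - 1).choose j : ℚ)) / ((m - 1).choose i : ℚ)) :
    ∀ i, 1 ≤ i → i ≤ m - 2 → g (i - 1) < g i := by
  rintro i hi hi'
  obtain ⟨k, rfl⟩ : ∃ k, i = k + 1 := ⟨i - 1, by omega⟩
  rw [Nat.add_sub_cancel, hg k (by omega), hg (k + 1) hi']
  exact sum_range_choose_div_choose_lt_succ (m - 1) (by omega)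

/-- For `m ≥ 2` and `g_i = (∑_{j=0}^{i} C(m-1,j)) / C(m-1,i)` (for `0 ≤ i ≤ m-2`),
the sequence `g_i` is strictly increasing: `g_{i-1} < g_i` for `1 ≤ i ≤ m-2`. -/
theorem stmt2 (m : ℕ) (hm : 2 ≤ m)
    (g : ℕ → ℚ)
    (hg : ∀ i, i ≤ m - 2 →
      g i = (∑ j ∈ Finset.range (i + 1), ((m - 1).choose j : ℚ)) / ((m - 1).choose i : ℚ)) :
    ∀ i, 1 ≤ i → i ≤ m - 2 → g (i - 1) < g i :=
  stmt2_general m g hg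
end

section
/- For any integers m ≥ 2 and i with 1 ≤ i ≤ m-2, ((m-i)/i) · ∑_{j=0}^{i-1} C(m-1, j) < ∑_{j=0}^{i} C(m-1, j). -/
open Finset

/-- By `C(n, j+1) (j+1) = C(n, j) (n-j)` this reduces to `(n+1-i)(j+1) ≤ i (n-j)`,
that is, to `(n+1)(j+1) ≤ (n+1) i`. -/
theorem sub_mul_choose_le_mul_choose_succ {n i j : ℕ} (hji : j < i) :
    ((n : ℚ) + 1 - i) * n.choose j ≤ i * n.choose (j + 1) := by
  rcases le_or_gt j n with hjn | hnj
  · have hpascal : (n.choose (j + 1) : ℚ) * (j + 1) = n.choose j * (n - j) := by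
      rw [← Nat.cast_sub hjn]
      exact_mod_cast Nat.choose_succ_right_eq n j
    have hji' : (j : ℚ) + 1 ≤ i := by exact_mod_cast hji
    have hC : (0 : ℚ) ≤ n.choose j := Nat.cast_nonneg _
    nlinarith [mul_nonneg (mul_nonneg hC (sub_nonneg.2 hji')) (by positivity : (0 : ℚ) ≤ n + 1)]
  · simp [Nat.choose_eq_zero_of_lt hnj, Nat.choose_eq_zero_of_lt (hnj.trans (Nat.lt_succ_self j))]

theorem div_mul_choose_le_choose_succ {n i j : ℕ} (hji : j < i) :
    ((n : ℚ) + 1 - i) / i * n.choose j ≤ n.choose (j + 1) := by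
  have hi : (0 : ℚ) < i := by exact_mod_cast hji.trans_le' (Nat.zero_le j)
  rw [div_mul_eq_mul_div, div_le_iff₀ hi, mul_comm _ (i : ℚ)]
  exact sub_mul_choose_le_mul_choose_succ hji

theorem stmt3_general (m i : ℕ) (hm : 2 ≤ m) :
    (((m : ℚ) - i) / i) * ∑ j ∈ Finset.range i, ((m - 1).choose j : ℚ)
      < ∑ j ∈ Finset.range (i + 1), ((m - 1).choose j : ℚ) := by
  obtain ⟨n, rfl⟩ : ∃ n, m = n + 1 := ⟨m - 1, by omega⟩
  rw [add_tsub_cancel_right, Nat.cast_succ]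
  calc ((n : ℚ) + 1 - i) / i * ∑ j ∈ range i, (n.choose j : ℚ)
      = ∑ j ∈ range i, ((n : ℚ) + 1 - i) / i * n.choose j := mul_sum _ _ _
    _ ≤ ∑ j ∈ range i, (n.choose (j + 1) : ℚ) :=
        sum_le_sum fun j hj => div_mul_choose_le_choose_succ (mem_range.1 hj)
    _ < ∑ j ∈ range (i + 1), (n.choose j : ℚ) := by
        rw [sum_range_succ']
        simp

/-- For integers `m ≥ 2` and `1 ≤ i ≤ m-2`,
`((m-i)/i) · ∑_{j=0}^{i-1} C(m-1,j) < ∑_{j=0}^{i} C(m-1,j)`. -/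
theorem stmt3 (m i : ℕ) (hm : 2 ≤ m) (hi1 : 1 ≤ i) (hi2 : i ≤ m - 2) :
    (((m : ℚ) - i) / i) * ∑ j ∈ Finset.range i, ((m - 1).choose j : ℚ)
      < ∑ j ∈ Finset.range (i + 1), ((m - 1).choose j : ℚ) :=
  stmt3_general m i hm
end

section
/- Let m, Δ be positive integers with 2 ≤ m and Δ < f(m) where f(m) = m - 2 + m(m-1)/(2^m - 1 - m). Set γ = ((2^m - 1 - m)(m - Δ - 2) + m(m-1)) / ((m-2)·2^{m-1} + 1) (for m ≥ 3), and define c_i = (γ·∑_{j=0}^{i} C(m-1,j) - ((m-Δ-2+γ)/m)·∑_{j=0}^{i} C(m,j)) / C(m-1,i) for 0 ≤ i ≤ m-2. Then γ > 0, c_{m-2} = 1, 0 < c_0, and c_i ≤ c_{i+1} for 0 ≤ i ≤ m-3. -/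
/-!
Write `n = m - 1`, `B_i = ∑_{j ≤ i} C(n, j)` and `a = (m - Δ - 2 + γ) / m`. Pascal's rule gives
`∑_{j ≤ i} C(m, j) = 2 B_i - C(n, i)`, hence `c_i = a + (γ - 2a) · B_i / C(n, i)`.
Clearing the denominator of `γ` shows `γ - 2a = (m - 1) Δ / ((m - 2) 2^{m-1} + 1) ≥ 0`, and the ratio
`B_i / C(n, i)` is nondecreasing in `i` because `(n - 2i - 1) B_i ≤ (n - i) C(n, i)`; this gives the
monotonicity. At `i = m - 2` the ratio is `(2^{m-1} - 1) / (m - 1)`, which makes `c_{m-2} = 1`.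
Finally `c_0 = γ - a`, and the positivity of `γ` and of `γ - a` comes down to `Δ < f(m)` and
`m ≤ 2^{m-1}`.
-/

open Finset

namespace Nat

theorem sum_range_choose_succ_add_choose (n i : ℕ) :
    ∑ j ∈ range (i + 1), (n + 1).choose j + n.choose i = 2 * ∑ j ∈ range (i + 1), n.choose j := by
  induction i with
  | zero => simp
  | succ i ih =>
    rw [sum_range_succ, sum_range_succ (fun j => n.choose j), choose_succ_succ]
    simp only [succ_eq_add_one] at *
    omega

variable {K : Type*} [Field K] [LinearOrder K] [IsStrictOrderedRing K]

theorem cast_succ_mul_choose_succ (n i : ℕ) :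
    ((i : K) + 1) * n.choose (i + 1) = (n - i) * n.choose i := by
  rcases le_or_gt i n with hi | hi
  · have := congrArg (Nat.cast : ℕ → K) (choose_succ_right_eq n i)
    push_cast [Nat.cast_sub hi] at this
    linear_combination this
  · simp [choose_eq_zero_of_lt hi, choose_eq_zero_of_lt (lt_succ_of_lt hi)]

theorem choose_le_sum_range_choose (n i : ℕ) :
    (n.choose i : K) ≤ ∑ j ∈ range (i + 1), (n.choose j : K) :=
  single_le_sum (f := fun j => (n.choose j : K)) (fun _ _ => by positivity) (self_mem_range_succ i)

theorem sub_mul_sum_range_choose_le (n i : ℕ) :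
    ((n : K) - 2 * i - 1) * ∑ j ∈ range (i + 1), (n.choose j : K) ≤ (n - i) * n.choose i := by
  induction i with
  | zero => simp
  | succ i ih =>
    have hB := choose_le_sum_range_choose (K := K) n i
    have hstep := cast_succ_mul_choose_succ (K := K) n i
    rw [sum_range_succ]
    push_cast
    nlinarith

theorem sum_range_choose_mul_choose_succ_le (n i : ℕ) :
    (∑ j ∈ range (i + 1), (n.choose j : K)) * n.choose (i + 1)
      ≤ (∑ j ∈ range (i + 2), (n.choose j : K)) * n.choose i := by
  have hL := sub_mul_sum_range_choose_le (K := K) n i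
  have hstep := cast_succ_mul_choose_succ (K := K) n i
  rw [sum_range_succ _ (i + 1)]
  set B := ∑ j ∈ range (i + 1), (n.choose j : K)
  refine le_of_mul_le_mul_left ?_ (by positivity : (0 : K) < i + 1)
  linear_combination (n.choose i : K) * hL + (B - n.choose i) * hstep

end Nat

section ChooseRatio

variable {K : Type*} [Field K] [LinearOrder K] [IsStrictOrderedRing K]

def chooseRatio (n i : ℕ) : K := (∑ j ∈ range (i + 1), (n.choose j : K)) / n.choose i

theorem chooseRatio_zero_right (n : ℕ) : (chooseRatio n 0 : K) = 1 := by
  simp [chooseRatio]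

theorem chooseRatio_le_succ {n i : ℕ} (h : i + 1 ≤ n) :
    (chooseRatio n i : K) ≤ chooseRatio n (i + 1) := by
  have hb : (0 : K) < n.choose i := by exact_mod_cast Nat.choose_pos (by omega)
  have hb' : (0 : K) < n.choose (i + 1) := by exact_mod_cast Nat.choose_pos h
  rw [chooseRatio, chooseRatio, div_le_div_iff₀ hb hb']
  exact Nat.sum_range_choose_mul_choose_succ_le n i

theorem chooseRatio_pred {n : ℕ} (hn : 1 ≤ n) :
    (chooseRatio n (n - 1) : K) = (2 ^ n - 1) / n := by
  obtain ⟨n, rfl⟩ : ∃ k, n = k + 1 := ⟨n - 1, by omega⟩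
  have hsum := Nat.sum_range_choose (n + 1)
  rw [sum_range_succ, Nat.choose_self] at hsum
  have hsum' : ∑ j ∈ range (n + 1), ((n + 1).choose j : K) = 2 ^ (n + 1) - 1 := by
    rw [eq_sub_iff_add_eq]
    exact_mod_cast hsum
  simp [chooseRatio, hsum', Nat.choose_succ_self_right]

theorem div_choose_eq_add_mul_chooseRatio {m i : ℕ} (hm : 1 ≤ m) (hi : i ≤ m - 1) (γ a : K) :
    (γ * ∑ j ∈ range (i + 1), ((m - 1).choose j : K) - a * ∑ j ∈ range (i + 1), (m.choose j : K))
        / (m - 1).choose i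
      = a + (γ - 2 * a) * chooseRatio (m - 1) i := by
  obtain ⟨n, rfl⟩ : ∃ k, m = k + 1 := ⟨m - 1, by omega⟩
  rw [Nat.add_sub_cancel] at hi ⊢
  have hb : (n.choose i : K) ≠ 0 := by exact_mod_cast (Nat.choose_pos hi).ne'
  have hsum := congrArg (Nat.cast : ℕ → K) (Nat.sum_range_choose_succ_add_choose n i)
  push_cast at hsum
  rw [chooseRatio, eq_sub_of_add_eq hsum]
  field_simp
  ring

end ChooseRatio

namespace PathCouplingWeights

-- `M` stands for `m` and `X` for `2 ^ (m - 1)`.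
variable {M X Δ γ : ℚ}

theorem denom_pos (hM : 2 ≤ M) (hX : M ≤ X) : 0 < (M - 2) * X + 1 := by nlinarith

theorem gamma_pos (hM : 2 ≤ M) (hX : M ≤ X) (hΔ : Δ < M - 2 + M * (M - 1) / (2 * X - 1 - M))
    (hγ : γ * ((M - 2) * X + 1) = (2 * X - 1 - M) * (M - Δ - 2) + M * (M - 1)) : 0 < γ := by
  have hs : 0 < 2 * X - 1 - M := by linarith
  rw [← sub_lt_iff_lt_add', lt_div_iff₀ hs] at hΔ
  exact pos_of_mul_pos_left (by nlinarith) (denom_pos hM hX).le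

theorem gamma_sub_two_mul_eq (hM : 2 ≤ M) (hX : M ≤ X)
    (hγ : γ * ((M - 2) * X + 1) = (2 * X - 1 - M) * (M - Δ - 2) + M * (M - 1)) :
    γ - 2 * ((M - Δ - 2 + γ) / M) = (M - 1) * Δ / ((M - 2) * X + 1) := by
  have hD := (denom_pos hM hX).ne'
  have hM0 : M ≠ 0 := by linarith
  field_simp
  linear_combination (M - 2) * hγ

theorem add_mul_pred_ratio_eq_one (hM : 2 ≤ M) (hX : M ≤ X)
    (hγ : γ * ((M - 2) * X + 1) = (2 * X - 1 - M) * (M - Δ - 2) + M * (M - 1)) :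
    (M - Δ - 2 + γ) / M + (γ - 2 * ((M - Δ - 2 + γ) / M)) * ((X - 1) / (M - 1)) = 1 := by
  have hD := (denom_pos hM hX).ne'
  have hM0 : M ≠ 0 := by linarith
  have hM1 : M - 1 ≠ 0 := by linarith
  rw [gamma_sub_two_mul_eq hM hX hγ]
  field_simp
  linear_combination hγ

theorem gamma_sub_pos (hM : 2 ≤ M) (hX : M ≤ X) (hγpos : 0 < γ)
    (hγ : γ * ((M - 2) * X + 1) = (2 * X - 1 - M) * (M - Δ - 2) + M * (M - 1)) :
    0 < γ - (M - Δ - 2 + γ) / M := by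
  have hM0 : 0 < M := by linarith
  rw [sub_pos, div_lt_iff₀ hM0]
  rcases le_or_gt (M - Δ - 2) 0 with hA | hA
  · nlinarith
  · have key : ((M - 1) * γ - (M - Δ - 2)) * ((M - 2) * X + 1)
        = (M - Δ - 2) * M * (X - M) + M * (M - 1) ^ 2 := by
      linear_combination (M - 1) * hγ
    have hM1 : 0 < M - 1 := by linarith
    have hXM : 0 ≤ X - M := by linarith
    have : 0 < (M - 1) * γ - (M - Δ - 2) :=
      pos_of_mul_pos_left (by rw [key]; positivity) (denom_pos hM hX).le
    linarith

end PathCouplingWeights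

open PathCouplingWeights in
theorem stmt4_general (m Δ : ℕ) (hm : 2 ≤ m)
    (hΔf : (Δ : ℚ) < (m : ℚ) - 2 + m * (m - 1) / (2 ^ m - 1 - m))
    (γ : ℚ)
    (hγ : γ = ((2 ^ m - 1 - (m : ℚ)) * ((m : ℚ) - Δ - 2) + m * (m - 1))
              / (((m : ℚ) - 2) * 2 ^ (m - 1) + 1))
    (c : ℕ → ℚ)
    (hc : ∀ i, i ≤ m - 2 →
      c i = (γ * ∑ j ∈ Finset.range (i + 1), ((m - 1).choose j : ℚ)
              - (((m : ℚ) - Δ - 2 + γ) / m) * ∑ j ∈ Finset.range (i + 1), (m.choose j : ℚ))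
            / ((m - 1).choose i : ℚ)) :
    0 < γ ∧ c (m - 2) = 1 ∧ 0 < c 0 ∧ ∀ i, i + 1 ≤ m - 2 → c i ≤ c (i + 1) := by
  have hM : (2 : ℚ) ≤ m := by exact_mod_cast hm
  have hX : (m : ℚ) ≤ 2 ^ (m - 1) := by
    have := Nat.lt_two_pow_self (n := m - 1)
    exact_mod_cast (by omega : m ≤ 2 ^ (m - 1))
  rw [show (2 : ℚ) ^ m = 2 * 2 ^ (m - 1) by rw [← pow_succ', Nat.sub_add_cancel (by omega)]]
    at hΔf hγ
  have hγD := (eq_div_iff (denom_pos hM hX).ne').mp hγ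
  have hγpos := gamma_pos hM hX hΔf hγD
  set a := ((m : ℚ) - Δ - 2 + γ) / m
  have hgap : 0 ≤ γ - 2 * a := by
    rw [gamma_sub_two_mul_eq hM hX hγD]
    have := denom_pos hM hX
    have : (0 : ℚ) ≤ m - 1 := by linarith
    positivity
  have hc' : ∀ i, i ≤ m - 2 → c i = a + (γ - 2 * a) * chooseRatio (m - 1) i :=
    fun i hi => (hc i hi).trans (div_choose_eq_add_mul_chooseRatio (by omega) (by omega) _ _)
  refine ⟨hγpos, ?_, ?_, fun i hi => ?_⟩
  · rw [hc' _ le_rfl, show m - 2 = m - 1 - 1 by omega, chooseRatio_pred (by omega),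
      Nat.cast_sub (by omega : 1 ≤ m), Nat.cast_one]
    exact add_mul_pred_ratio_eq_one hM hX hγD
  · rw [hc' 0 (Nat.zero_le _), chooseRatio_zero_right, mul_one]
    linarith [gamma_sub_pos hM hX hγpos hγD]
  · rw [hc' i (by omega), hc' (i + 1) hi]
    gcongr
    exact chooseRatio_le_succ (by omega)

/-- For `2 ≤ m`, `1 ≤ Δ` with `Δ < f(m) = m - 2 + m(m-1)/(2^m-1-m)`, the constants
`γ = ((2^m-1-m)(m-Δ-2) + m(m-1)) / ((m-2)·2^{m-1}+1)` and
`c_i = (γ·∑_{j≤i} C(m-1,j) - ((m-Δ-2+γ)/m)·∑_{j≤i} C(m,j)) / C(m-1,i)`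
satisfy `γ > 0`, `c_{m-2} = 1`, `c_0 > 0` and `c_i ≤ c_{i+1}` for `i+1 ≤ m-2`. -/
theorem stmt4 (m Δ : ℕ) (hm : 2 ≤ m) (hΔ : 1 ≤ Δ)
    (hΔf : (Δ : ℚ) < (m : ℚ) - 2 + m * (m - 1) / (2 ^ m - 1 - m))
    (γ : ℚ)
    (hγ : γ = ((2 ^ m - 1 - (m : ℚ)) * ((m : ℚ) - Δ - 2) + m * (m - 1))
              / (((m : ℚ) - 2) * 2 ^ (m - 1) + 1))
    (c : ℕ → ℚ)
    (hc : ∀ i, i ≤ m - 2 →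
      c i = (γ * ∑ j ∈ Finset.range (i + 1), ((m - 1).choose j : ℚ)
              - (((m : ℚ) - Δ - 2 + γ) / m) * ∑ j ∈ Finset.range (i + 1), (m.choose j : ℚ))
            / ((m - 1).choose i : ℚ)) :
    0 < γ ∧ c (m - 2) = 1 ∧ 0 < c 0 ∧ ∀ i, i + 1 ≤ m - 2 → c i ≤ c (i + 1) :=
  stmt4_general m Δ hm hΔf γ hγ c hc
end

section
/- Let m, Δ be positive integers and suppose real numbers c_{-1} = 0 < c_0 ≤ c_1 ≤ ... ≤ c_{m-2} = 1, c_{m-1} ≥ Δ+1, and γ ≥ 0 satisfy i·c_{i-1} - (m+1)·c_i + (m-i-1)·c_{i+1} ≤ -γ for all i = 0,...,m-2. Then summing these inequalities from index i to m-2 yields i·c_{i-1} ≤ (m-i)·c_i + (m - Δ - 2) - (m-i-1)·γ for all i = 0,...,m-1. -/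
/-- Telescoping the one-step contraction inequalities: if
`c_{-1} = 0 < c_0 ≤ ⋯ ≤ c_{m-2} = 1`, `c_{m-1} ≥ Δ+1`, `γ ≥ 0` and
`i·c_{i-1} - (m+1)·c_i + (m-i-1)·c_{i+1} ≤ -γ` for `0 ≤ i ≤ m-2`, then
`i·c_{i-1} ≤ (m-i)·c_i + (m-Δ-2) - (m-i-1)·γ` for `0 ≤ i ≤ m-1`. -/
theorem stmt5 (m Δ : ℕ) (hm : 1 ≤ m) (hΔ : 1 ≤ Δ)
    (c : ℤ → ℝ) (γ : ℝ)
    (hcm1 : c (-1) = 0) (hc0 : 0 < c 0)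
    (hmono : ∀ i : ℤ, 0 ≤ i → i ≤ (m : ℤ) - 3 → c i ≤ c (i + 1))
    (hctop : c ((m : ℤ) - 2) = 1)
    (hcΔ : ((Δ : ℝ) + 1) ≤ c ((m : ℤ) - 1))
    (hγ : 0 ≤ γ)
    (hineq : ∀ i : ℤ, 0 ≤ i → i ≤ (m : ℤ) - 2 →
      (i : ℝ) * c (i - 1) - ((m : ℝ) + 1) * c i + ((m : ℝ) - (i : ℝ) - 1) * c (i + 1) ≤ -γ) :
    ∀ i : ℤ, 0 ≤ i → i ≤ (m : ℤ) - 1 →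
      (i : ℝ) * c (i - 1)
        ≤ ((m : ℝ) - (i : ℝ)) * c i + ((m : ℝ) - (Δ : ℝ) - 2)
          - ((m : ℝ) - (i : ℝ) - 1) * γ := by
  have key : ∀ n : ℕ, ∀ i : ℤ, 0 ≤ i → i = (m : ℤ) - 1 - n →
      (i : ℝ) * c (i - 1)
        ≤ ((m : ℝ) - (i : ℝ)) * c i + ((m : ℝ) - (Δ : ℝ) - 2)
          - ((m : ℝ) - (i : ℝ) - 1) * γ := by
    intro n
    induction n with
    | zero =>
      intro i hi0 hieq
      simp only [Nat.cast_zero, sub_zero] at hieq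
      subst hieq
      rcases le_or_gt 2 m with h2 | h1
      · have e : ((m:ℤ) - 1) - 1 = (m:ℤ) - 2 := by ring
        rw [e, hctop]
        push_cast
        have hΔ1 : (1:ℝ) ≤ (Δ:ℝ) := by exact_mod_cast hΔ
        linarith [hcΔ]
      · have hm1 : m = 1 := by omega
        subst hm1
        norm_num at hcΔ ⊢
        linarith [hcΔ]
    | succ k ih =>
      intro i hi0 hieq
      have hi1eq : i + 1 = (m : ℤ) - 1 - k := by push_cast at hieq ⊢; omega
      have hi1 : (0:ℤ) ≤ i + 1 := by omega
      have IH := ih (i + 1) hi1 hi1eq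
      have hi2 : i ≤ (m:ℤ) - 2 := by push_cast at hieq; omega
      have H := hineq i hi0 hi2
      have e1 : (i + 1 : ℤ) - 1 = i := by ring
      rw [e1] at IH
      have e2 : ((i + 1 : ℤ) : ℝ) = (i:ℝ) + 1 := by push_cast; ring
      rw [e2] at IH
      nlinarith [IH, H, hγ]
  intro i hi0 hi1
  have : ∃ n : ℕ, i = (m : ℤ) - 1 - n := by
    refine ⟨((m:ℤ) - 1 - i).toNat, ?_⟩
    omega
  obtain ⟨n, hn⟩ := this
  exact key n i hi0 hn
end

section
/- Let m ≥ 2 and let u_{-1} = 0 and u_{i-1} ≤ u_i + ((m-Δ-2+γ)/m)·C(m,i) - γ·C(m-1,i) for i = 0,...,m-2, with u_{m-2} = m-1. Then γ ≤ (2^m - 1 - m)/((m-2)·2^{m-1} + 1) · (m - Δ - 2 + m(m-1)/(2^m - 1 - m)) when m ≥ 3. -/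
/-! Summing the recurrence over `0 ≤ i ≤ m-2` telescopes and, by the binomial sums, gives
`0 ≤ (m-1) + c·(2^m-1-m) - γ·(2^{m-1}-1)` with `c = (m-Δ-2+γ)/m`. After clearing `m`, the
coefficient of `γ` is `(2^m-1-m) - m(2^{m-1}-1) = -((m-2)·2^{m-1}+1)`, so solving for `γ`
gives the bound. -/

open Finset

theorem le_add_sum_of_le_add {u : ℤ → ℝ} {a : ℕ → ℝ} {n : ℕ}
    (h : ∀ i < n, u (i - 1) ≤ u i + a i) : u (-1) ≤ u (n - 1) + ∑ i ∈ range n, a i := by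
  have telescope : ∑ i ∈ range n, (u (i - 1) - u i) = u (-1) - u (n - 1) := by
    simpa using sum_range_sub' (fun i : ℕ ↦ u ((i : ℤ) - 1)) n
  have : ∑ i ∈ range n, (u (i - 1) - u i) ≤ ∑ i ∈ range n, a i :=
    sum_le_sum fun i hi ↦ by linarith [h i (mem_range.mp hi)]
  linarith

theorem sum_range_choose_self (n : ℕ) : ∑ i ∈ range n, (n.choose i : ℝ) = 2 ^ n - 1 := by
  have h := Nat.sum_range_choose n
  rw [sum_range_succ, Nat.choose_self] at h
  have := congrArg (Nat.cast : ℕ → ℝ) h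
  push_cast at this
  linarith

theorem sum_range_succ_choose_add_two (n : ℕ) :
    ∑ i ∈ range (n + 1), ((n + 2).choose i : ℝ) = 2 ^ (n + 2) - 1 - (n + 2) := by
  have h := Nat.sum_range_choose (n + 2)
  rw [sum_range_succ, sum_range_succ, Nat.choose_self, Nat.choose_succ_self_right] at h
  have := congrArg (Nat.cast : ℕ → ℝ) h
  push_cast at this
  linarith

/-- `p` plays the role of `2^{m-1}`. -/
theorem le_of_nonneg_telescoped {M Δ γ p : ℝ} (hM : 2 ≤ M) (hMp : M ≤ p)
    (h : 0 ≤ (M - 1) + (M - Δ - 2 + γ) / M * (2 * p - 1 - M) - γ * (p - 1)) :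
    γ ≤ (2 * p - 1 - M) / ((M - 2) * p + 1) * (M - Δ - 2 + M * (M - 1) / (2 * p - 1 - M)) := by
  have hA : 0 < 2 * p - 1 - M := by linarith
  have hB : 0 < (M - 2) * p + 1 := by nlinarith
  have hcleared : M * (M - 1) + (M - Δ - 2 + γ) * (2 * p - 1 - M) - γ * M * (p - 1) ≥ 0 := by
    have := mul_nonneg (by linarith : (0 : ℝ) ≤ M) h
    field_simp at this
    linarith
  have hcancel : (2 * p - 1 - M) * (M * (M - 1) / (2 * p - 1 - M)) = M * (M - 1) := by
    field_simp
  rw [div_mul_eq_mul_div, le_div_iff₀ hB, mul_add (2 * p - 1 - M), hcancel]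
  nlinarith

/-- If `u_{-1} = 0`, `u_{m-2} = m-1` and
`u_{i-1} ≤ u_i + ((m-Δ-2+γ)/m)·C(m,i) - γ·C(m-1,i)` for `0 ≤ i ≤ m-2`, then for `m ≥ 3`
`γ ≤ (2^m-1-m)/((m-2)·2^{m-1}+1) · (m-Δ-2 + m(m-1)/(2^m-1-m))`. -/
theorem stmt6 (m : ℕ) (hm : 3 ≤ m) (Δ γ : ℝ) (u : ℤ → ℝ)
    (h0 : u (-1) = 0) (hend : u ((m : ℤ) - 2) = (m : ℝ) - 1)
    (hrec : ∀ i : ℤ, 0 ≤ i → i ≤ (m : ℤ) - 2 →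
      u (i - 1) ≤ u i + (((m : ℝ) - Δ - 2 + γ) / m) * (m.choose i.toNat : ℝ)
                  - γ * ((m - 1).choose i.toNat : ℝ)) :
    γ ≤ ((2 : ℝ) ^ m - 1 - m) / (((m : ℝ) - 2) * 2 ^ (m - 1) + 1)
        * ((m : ℝ) - Δ - 2 + m * ((m : ℝ) - 1) / (2 ^ m - 1 - m)) := by
  obtain ⟨n, rfl⟩ : ∃ n, m = n + 2 := ⟨m - 2, by omega⟩
  have htele := le_add_sum_of_le_add (u := u) (n := n + 1)
    (a := fun i ↦ ((n + 2 : ℝ) - Δ - 2 + γ) / (n + 2) * ((n + 2).choose i : ℝ)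
      - γ * ((n + 1).choose i : ℝ)) fun i hi ↦ by
    have := hrec i (by positivity) (by push_cast; omega)
    simp only [Int.toNat_natCast] at this
    push_cast at this
    linarith
  simp only [sum_sub_distrib, ← mul_sum, sum_range_choose_self,
    sum_range_succ_choose_add_two] at htele
  push_cast at htele hend ⊢
  simp only [add_sub_cancel_right, h0] at htele hend
  rw [hend, pow_succ' 2 (n + 1)] at htele
  rw [pow_succ' 2 (n + 1)]
  refine le_of_nonneg_telescoped (by linarith) ?_ (by linarith)
  exact_mod_cast Nat.lt_two_pow_self
end

section
/- Let q > Δ ≥ 1 be integers, Q a set of q colours, q_0, q_1 ∈ Q distinct, and for 1 ≤ i ≤ Δ let S_i ⊆ Q \ {q_0} with |S_i| ≥ q - Δ, and suppose q_1 ∈ S_1. Let s_i be chosen uniformly and independently from S_i, and let c = |{s_1,...,s_Δ}|. Then E[q - c | s_1 = q_1] ≥ 1 + (q-2)·(1 - 1/(q-Δ))^{(Δ-1)(q-Δ)/(q-2)}. -/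
/-!
Conditioning on `σ i₀ = b` replaces `S i₀` by `{b}`; the coordinates stay independent and
uniform, so by linearity the expected number of missed colours is `∑ₖ ∏ᵢ (1 - [k ∈ Sᵢ] / |Sᵢ|)`.
The colour `a` is always missed and contributes `1`. For every other colour `k`, Bernoulli's
inequality `1 - 1/c ≥ (1 - 1/n) ^ (n/c)` (for `c ≥ n`) bounds its term below by `(1 - 1/n) ^ w k`,
where `w k = ∑_{i : k ∈ Sᵢ} n / |Sᵢ|`. The weights of the colours other than `a, b` add up to at
most `(|ι| - 1) n`, since each `Sᵢ` contributes at most `n` and `{b}` contributes nothing; Jensen's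
inequality for the convex function `t ↦ (1 - 1/n) ^ t` finishes the proof.
-/

open Finset

lemma one_sub_one_div_rpow_div_le {n c : ℝ} (hn : 1 ≤ n) (hnc : n ≤ c) :
    (1 - 1 / n) ^ (n / c) ≤ 1 - 1 / c := by
  have hn₀ : 0 < n := by linarith
  have hc₀ : 0 < c := by linarith
  calc (1 - 1 / n) ^ (n / c) = (1 + -(1 / n)) ^ (n / c) := by rw [sub_eq_add_neg]
    _ ≤ 1 + n / c * -(1 / n) := by
      refine rpow_one_add_le_one_add_mul_self ?_ (by positivity) ((div_le_one hc₀).2 hnc)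
      rw [neg_le_neg_iff, div_le_one hn₀]
      exact hn
    _ = 1 - 1 / c := by field_simp; ring

lemma card_mul_rpow_sum_div_card_le {β : Type*} {b : ℝ} (hb : 0 < b) (R : Finset β)
    (f : β → ℝ) : #R * b ^ ((∑ k ∈ R, f k) / #R) ≤ ∑ k ∈ R, b ^ f k := by
  rcases R.eq_empty_or_nonempty with rfl | hR
  · simp
  have hR₀ : (0 : ℝ) < #R := by exact_mod_cast hR.card_pos
  have hJensen := (convexOn_rpow_left hb).map_sum_le (t := R) (w := fun _ => (#R : ℝ)⁻¹)
    (p := f) (fun _ _ => by positivity) (by simp [hR₀.ne']) (fun _ _ => Set.mem_univ _)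
  simp only [smul_eq_mul, ← mul_sum] at hJensen
  rw [div_eq_inv_mul]
  calc _ ≤ (#R : ℝ) * ((#R : ℝ)⁻¹ * ∑ k ∈ R, b ^ f k) := by gcongr
    _ = _ := by field_simp

variable {ι α : Type*} [Fintype ι] [DecidableEq α]

lemma sum_card_compl_image_piFinset [DecidableEq ι] [Fintype α] (T : ι → Finset α) :
    ∑ σ ∈ Fintype.piFinset T, #(univ.image σ)ᶜ = ∑ k, ∏ i, #((T i).erase k) := by
  have hmissed (σ : ι → α) :
      (univ.image σ)ᶜ = univ.bipartiteAbove (fun σ k => ∀ i, σ i ≠ k) σ := by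
    ext; simp
  simp_rw [hmissed, sum_card_bipartiteAbove_eq_sum_card_bipartiteBelow, ← Fintype.card_piFinset]
  refine sum_congr rfl fun k _ => congrArg card ?_
  ext σ
  simp [bipartiteBelow, Fintype.mem_piFinset, forall_and, and_comm]

noncomputable def missProb (T : ι → Finset α) (k : α) : ℝ :=
  ∏ i, (#((T i).erase k) : ℝ) / #(T i)

noncomputable def hitWeight (n : ℝ) (T : ι → Finset α) (k : α) : ℝ :=
  ∑ i, if k ∈ T i then n / #(T i) else 0

lemma sum_card_sub_card_image_div_card_piFinset [DecidableEq ι] [Fintype α] (T : ι → Finset α) :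
    (∑ σ ∈ Fintype.piFinset T, ((Fintype.card α : ℝ) - #(univ.image σ)))
      / #(Fintype.piFinset T) = ∑ k, missProb T k := by
  have hmissed (σ : ι → α) : (Fintype.card α : ℝ) - #(univ.image σ) = #(univ.image σ)ᶜ := by
    rw [card_compl, Nat.cast_sub (card_le_univ _)]
  simp_rw [hmissed, ← Nat.cast_sum, sum_card_compl_image_piFinset, Fintype.card_piFinset,
    Nat.cast_sum, Nat.cast_prod, sum_div, missProb, prod_div_distrib]

lemma missProb_nonneg (T : ι → Finset α) (k : α) : 0 ≤ missProb T k :=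
  prod_nonneg fun _ _ => by positivity

lemma missProb_eq_one (T : ι → Finset α) (hT : ∀ i, (T i).Nonempty) {k : α}
    (hk : ∀ i, k ∉ T i) : missProb T k = 1 :=
  prod_eq_one fun i _ => by
    rw [erase_eq_of_notMem (hk i), div_self (by exact_mod_cast (hT i).card_pos.ne')]

lemma rpow_hitWeight_le_missProb {n : ℝ} (hn : 1 ≤ n) {T : ι → Finset α}
    (hT : ∀ i, (T i).Nonempty) {k : α} (hk : ∀ i, k ∈ T i → n ≤ #(T i)) :
    (1 - 1 / n) ^ hitWeight n T k ≤ missProb T k := by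
  have hx : 0 ≤ 1 - 1 / n := by rw [sub_nonneg, div_le_one (by linarith)]; exact hn
  rw [hitWeight, Real.rpow_sum_of_nonneg hx fun i _ => by split_ifs <;> positivity]
  refine prod_le_prod (fun i _ => by positivity) fun i _ => ?_
  have hTi : (#(T i) : ℝ) ≠ 0 := by exact_mod_cast (hT i).card_pos.ne'
  split_ifs with hki
  · rw [card_erase_of_mem hki, Nat.cast_sub (hT i).card_pos, Nat.cast_one, sub_div, div_self hTi]
    exact one_sub_one_div_rpow_div_le hn (hk i hki)
  · rw [Real.rpow_zero, erase_eq_of_notMem hki, div_self hTi]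

lemma sum_ite_mem_div_card_le {n : ℝ} (hn : 0 ≤ n) (R T : Finset α) :
    ∑ k ∈ R, (if k ∈ T then n / #T else 0) ≤ n := by
  rw [sum_ite_mem, sum_const, nsmul_eq_mul]
  rcases T.eq_empty_or_nonempty with rfl | hT
  · simpa using hn
  · have hT₀ : (0 : ℝ) < #T := by exact_mod_cast hT.card_pos
    calc (#(R ∩ T) : ℝ) * (n / #T) ≤ #T * (n / #T) := by
          gcongr; exact inter_subset_right
      _ = n := mul_div_cancel₀ n hT₀.ne'

lemma sum_hitWeight_le {n : ℝ} (hn : 0 ≤ n) (T : ι → Finset α) {R : Finset α} {i₀ : ι}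
    (hR : Disjoint R (T i₀)) :
    ∑ k ∈ R, hitWeight n T k ≤ (Fintype.card ι - 1) * n := by
  classical
  simp only [hitWeight]
  rw [sum_comm, ← add_sum_erase _ _ (mem_univ i₀), sum_ite_mem,
    disjoint_iff_inter_eq_empty.1 hR, sum_empty, zero_add]
  calc _ ≤ #(univ.erase i₀) • n :=
        sum_le_card_nsmul _ _ _ fun i _ => sum_ite_mem_div_card_le hn _ _
    _ = (Fintype.card ι - 1) * n := by
      rw [card_erase_of_mem (mem_univ _), nsmul_eq_mul, card_univ,
        Nat.cast_pred (Fintype.card_pos_iff.2 ⟨i₀⟩)]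

lemma card_mul_rpow_le_sum_missProb {n : ℝ} (hn : 1 < n) {T : ι → Finset α}
    (hT : ∀ i, (T i).Nonempty) {i₀ : ι} (hTn : ∀ i ≠ i₀, n ≤ #(T i)) {R : Finset α}
    (hR : Disjoint R (T i₀)) :
    #R * (1 - 1 / n) ^ ((Fintype.card ι - 1) * n / #R) ≤ ∑ k ∈ R, missProb T k := by
  have hx₀ : 0 < 1 - 1 / n := by rw [sub_pos, div_lt_one (by linarith)]; exact hn
  have hx₁ : 1 - 1 / n ≤ 1 := sub_le_self 1 (by positivity)
  calc _ ≤ #R * (1 - 1 / n) ^ ((∑ k ∈ R, hitWeight n T k) / #R) := by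
        gcongr ?_ * ?_
        exact Real.rpow_le_rpow_of_exponent_ge hx₀ hx₁
          (div_le_div_of_nonneg_right (sum_hitWeight_le (by linarith) T hR) (by positivity))
    _ ≤ ∑ k ∈ R, (1 - 1 / n) ^ hitWeight n T k := card_mul_rpow_sum_div_card_le hx₀ R _
    _ ≤ ∑ k ∈ R, missProb T k := sum_le_sum fun k hk =>
        rpow_hitWeight_le_missProb hn.le hT fun i hki =>
          hTn i (by rintro rfl; exact disjoint_left.1 hR hk hki)

theorem one_add_mul_rpow_le_mean_card_sub_card_image [DecidableEq ι] [Fintype α] {n : ℝ}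
    (hn : 1 < n) {S : ι → Finset α} {i₀ : ι} {a b : α} (hab : a ≠ b) (ha : ∀ i, a ∉ S i)
    (hSn : ∀ i, n ≤ #(S i)) (hb : b ∈ S i₀) :
    1 + (Fintype.card α - 2) * (1 - 1 / n) ^ ((Fintype.card ι - 1) * n / (Fintype.card α - 2))
      ≤ (∑ σ ∈ Fintype.piFinset S with σ i₀ = b, ((Fintype.card α : ℝ) - #(univ.image σ)))
        / #{σ ∈ Fintype.piFinset S | σ i₀ = b} := by
  rw [← Fintype.piFinset_update_singleton_eq_filter_piFinset_eq S i₀ hb,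
    sum_card_sub_card_image_div_card_piFinset, ← sum_add_sum_compl {a, b}, sum_pair hab]
  set T := Function.update S i₀ {b}
  have hT : ∀ i ≠ i₀, T i = S i := fun i hi => Function.update_of_ne hi _ _
  have hTne : ∀ i, (T i).Nonempty := fun i => by
    rcases eq_or_ne i i₀ with rfl | hi
    · simp [T]
    · rw [hT i hi, ← card_pos]
      exact_mod_cast (zero_lt_one.trans hn).trans_le (hSn i)
  have ha' : ∀ i, a ∉ T i := fun i => by
    rcases eq_or_ne i i₀ with rfl | hi
    · simpa [T] using hab
    · rw [hT i hi]; exact ha i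
  have hR : (#({a, b}ᶜ : Finset α) : ℝ) = Fintype.card α - 2 := by
    have h2 : 2 ≤ Fintype.card α := card_pair hab ▸ card_le_univ {a, b}
    rw [card_compl, card_pair hab, Nat.cast_sub h2, Nat.cast_ofNat]
  have hRT : Disjoint ({a, b}ᶜ : Finset α) (T i₀) := by simp [T]
  have hrest := card_mul_rpow_le_sum_missProb hn hTne (fun i hi => (hT i hi).symm ▸ hSn i) hRT
  rw [hR] at hrest
  linarith [missProb_eq_one T hTne ha', missProb_nonneg T b]

theorem stmt10_general (q Δ : ℕ) (hΔ : 0 < Δ) (hq : Δ + 2 ≤ q)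
    (q₀ q₁ : Fin q) (hne : q₀ ≠ q₁)
    (S : Fin Δ → Finset (Fin q))
    (hS0 : ∀ i, q₀ ∉ S i) (hScard : ∀ i, q - Δ ≤ (S i).card)
    (hq1 : q₁ ∈ S ⟨0, hΔ⟩) :
    1 + ((q : ℝ) - 2) *
        Real.rpow (1 - 1 / ((q : ℝ) - Δ)) (((Δ : ℝ) - 1) * ((q : ℝ) - Δ) / ((q : ℝ) - 2))
      ≤ (∑ σ ∈ (Fintype.piFinset S).filter (fun σ => σ ⟨0, hΔ⟩ = q₁),
            ((q : ℝ) - (Finset.image σ Finset.univ).card))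
          / ((Fintype.piFinset S).filter (fun σ => σ ⟨0, hΔ⟩ = q₁)).card := by
  have hn : (q : ℝ) - Δ = (q - Δ : ℕ) := by rw [Nat.cast_sub (by omega)]
  have h := one_add_mul_rpow_le_mean_card_sub_card_image (n := (q : ℝ) - Δ)
    (by rw [hn]; exact_mod_cast (by omega : 1 < q - Δ)) hne hS0
    (fun i => by rw [hn]; exact_mod_cast hScard i) hq1
  rw [Real.rpow_eq_pow]
  simpa only [Fintype.card_fin] using h

/-- Conditional Dyer–Frieze bound: with `q > Δ ≥ 1`, colours `Fin q`, distinct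
`q₀ q₁`, sets `S i ⊆ Q \ {q₀}` of size `≥ q - Δ` with `q₁ ∈ S 0`, and `s_i`
independent uniform on `S i`, the conditional expectation of `q - |{s_1,…,s_Δ}|`
given `s_1 = q₁` is at least `1 + (q-2)(1 - 1/(q-Δ))^{(Δ-1)(q-Δ)/(q-2)}`. -/
theorem stmt10 (q Δ : ℕ) (hΔ : 0 < Δ) (hq : Δ + 2 ≤ q) (hq3 : 3 ≤ q)
    (q₀ q₁ : Fin q) (hne : q₀ ≠ q₁)
    (S : Fin Δ → Finset (Fin q))
    (hS0 : ∀ i, q₀ ∉ S i) (hScard : ∀ i, q - Δ ≤ (S i).card)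
    (hq1 : q₁ ∈ S ⟨0, hΔ⟩) :
    1 + ((q : ℝ) - 2) *
        Real.rpow (1 - 1 / ((q : ℝ) - Δ)) (((Δ : ℝ) - 1) * ((q : ℝ) - Δ) / ((q : ℝ) - 2))
      ≤ (∑ σ ∈ (Fintype.piFinset S).filter (fun σ => σ ⟨0, hΔ⟩ = q₁),
            ((q : ℝ) - (Finset.image σ Finset.univ).card))
          / ((Fintype.piFinset S).filter (fun σ => σ ⟨0, hΔ⟩ = q₁)).card :=
  stmt10_general q Δ hΔ hq q₀ q₁ hne S hS0 hScard hq1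
end
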